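/- (Theorem 1(ii): Procedure 1 computes a valid subgradient of the dual function.) Assume μ_i((−∞,0]) = 0 for all i ∈ I. Let λ ∈ ℝ^K satisfy 0 ≤ λ_k ≤ 1 for all k ∈ K. Define b*(λ)_ik := (1 − λ_k)·r_ik, π(λ)_ik := s_i · f_i((1 − λ_k)·r_ik, (1 − λ_k)·r_ik) for (i,k) ∈ E, let x*(λ) be any maximizer of x ↦ Σ_{(i,k)∈E} π(λ)_ik · x_ik over S, and define g(λ) ∈ ℝ^K by g(λ)_k := m_k − Σ_{i∈I_k} r_ik · s_i · x*(λ)_ik · ρ_i(b*(λ)_ik). Then for every λ' ∈ ℝ^K, L*(λ') ≥ L*(λ) + Σ_{k∈K} g(λ)_k · (λ'_k − λ_k); i.e., g(λ) is a subgradient of L* at λ. -/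

import Mathlib

open MeasureTheory Finset

variable {I K : Type*}

/-- `fwin μ i a b = ∫ (a − t)·1_{(−∞,b]}(t) dμ_i(t)`: expected utility of bidding `b`
with valuation `a` in a second-price auction against highest competing bid with law `μ i`. -/
noncomputable def fwin (μ : I → Measure ℝ) (i : I) (a b : ℝ) : ℝ :=
  ∫ t in Set.Iic b, (a - t) ∂(μ i)

/-- `rho μ i b = μ_i((−∞,b])`: the probability of winning the auction with bid `b`. -/
noncomputable def rho (μ : I → Measure ℝ) (i : I) (b : ℝ) : ℝ :=
  ((μ i) (Set.Iic b)).toReal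

variable [Fintype I] [Fintype K] [DecidableEq I] [DecidableEq K]

/-- The allocation polytope `S`. -/
def alloc (E : Finset (I × K)) : Set ((I × K) → ℝ) :=
  {x | (∀ e ∈ E, 0 ≤ x e) ∧
    ∀ i : I, ∑ e ∈ E.filter (fun e => e.1 = i), x e ≤ 1}

/-- The profit objective `π(x,b)`. -/
noncomputable def profit (E : Finset (I × K)) (μ : I → Measure ℝ) (s : I → ℝ)
    (r : I × K → ℝ) (x b : (I × K) → ℝ) : ℝ :=
  ∑ e ∈ E, s e.1 * x e * fwin μ e.1 (r e) (b e)

/-- Expected spend of campaign `k`: `Σ_{i ∈ I_k} r_ik · s_i · x_ik · ρ_i(b_ik)`. -/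
noncomputable def spend (E : Finset (I × K)) (μ : I → Measure ℝ) (s : I → ℝ)
    (r : I × K → ℝ) (x b : (I × K) → ℝ) (k : K) : ℝ :=
  ∑ e ∈ E.filter (fun e => e.2 = k), r e * s e.1 * x e * rho μ e.1 (b e)

/-- The Lagrangian `L(x,b,λ)`. -/
noncomputable def Lag (E : Finset (I × K)) (μ : I → Measure ℝ) (s : I → ℝ)
    (r : I × K → ℝ) (m : K → ℝ) (x b : (I × K) → ℝ) (lam : K → ℝ) : ℝ :=
  profit E μ s r x b + ∑ k : K, lam k * (m k - spend E μ s r x b k)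

/-- The dual function `L*(λ) = sup {L(x,b,λ) : x ∈ S, b ≥ 0}`. -/
noncomputable def Lstar (E : Finset (I × K)) (μ : I → Measure ℝ) (s : I → ℝ)
    (r : I × K → ℝ) (m : K → ℝ) (lam : K → ℝ) : ℝ :=
  sSup {v : ℝ | ∃ x b : (I × K) → ℝ,
    x ∈ alloc E ∧ (∀ e ∈ E, 0 ≤ b e) ∧ v = Lag E μ s r m x b lam}

/-!
Subtracting `λ_k` times the spend from the profit only shifts the valuation in `f_i`:
`f_i(r, b) − λ r ρ_i(b) = f_i((1 − λ) r, b)`. Since `b ↦ f_i(a, b)` is maximised at `b = a`,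
the Lagrangian at `λ` is at most the linear function `Σ π(λ)_e x_e + Σ λ_k m_k`, with equality
at `b*(λ)`; hence `L*(λ) = L(x*, b*, λ)`. As `L(x*, b*, ·)` is affine in `λ` with slope `g(λ)`,
`L*(λ') ≥ L(x*, b*, λ') = L*(λ) + ⟨g(λ), λ' − λ⟩`.
-/

section Auction

variable {I : Type*} (μ : I → Measure ℝ) (i : I) [IsFiniteMeasure (μ i)]

theorem fwin_sub_left (hμ : Integrable (fun t => t) (μ i)) (a d b : ℝ) :
    fwin μ i (a - d) b = fwin μ i a b - d * rho μ i b := by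
  have hint : Integrable (fun t => a - t) (μ i) := (integrable_const a).sub hμ
  unfold fwin rho
  rw [← measureReal_def, mul_comm d, ← smul_eq_mul, ← setIntegral_const,
    ← integral_sub hint.integrableOn (integrable_const d).integrableOn]
  congr 1 with t
  ring

theorem fwin_le_fwin_self (hμ : Integrable (fun t => t) (μ i)) (a b : ℝ) :
    fwin μ i a b ≤ fwin μ i a a := by
  have hint : Integrable (fun t => a - t) (μ i) := (integrable_const a).sub hμ
  unfold fwin
  rw [← integral_indicator measurableSet_Iic, ← integral_indicator measurableSet_Iic]
  refine integral_mono (hint.indicator measurableSet_Iic) (hint.indicator measurableSet_Iic)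
    fun t => ?_
  simp only [Set.indicator_apply, Set.mem_Iic]
  split_ifs <;> linarith

end Auction

section Lagrangian

variable {I K : Type*} [Fintype K] [DecidableEq K]

/-- The coefficient `π(λ)_e` of `x_e` in the Lagrangian once the bids are optimised. -/
noncomputable def dualProfit (μ : I → Measure ℝ) (s : I → ℝ) (r : I × K → ℝ) (lam : K → ℝ)
    (e : I × K) : ℝ :=
  s e.1 * fwin μ e.1 ((1 - lam e.2) * r e) ((1 - lam e.2) * r e)

theorem Lag_sub_Lag (E : Finset (I × K)) (μ : I → Measure ℝ) (s : I → ℝ) (r : I × K → ℝ)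
    (m : K → ℝ) (x b : (I × K) → ℝ) (lam lam' : K → ℝ) :
    Lag E μ s r m x b lam' - Lag E μ s r m x b lam =
      ∑ k : K, (m k - spend E μ s r x b k) * (lam' k - lam k) := by
  simp only [Lag, add_sub_add_left_eq_sub, ← Finset.sum_sub_distrib]
  exact Finset.sum_congr rfl fun k _ => by ring

theorem Lag_eq_sum_fwin (E : Finset (I × K)) (μ : I → Measure ℝ) [∀ i, IsFiniteMeasure (μ i)]
    (hμ : ∀ i, Integrable (fun t => t) (μ i)) (s : I → ℝ) (r : I × K → ℝ) (m : K → ℝ)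
    (x b : (I × K) → ℝ) (lam : K → ℝ) :
    Lag E μ s r m x b lam =
      ∑ e ∈ E, s e.1 * x e * fwin μ e.1 ((1 - lam e.2) * r e) (b e) + ∑ k : K, lam k * m k := by
  have hspend : ∑ k : K, lam k * spend E μ s r x b k =
      ∑ e ∈ E, s e.1 * x e * (lam e.2 * r e * rho μ e.1 (b e)) := by
    rw [← Finset.sum_fiberwise E Prod.snd]
    refine Finset.sum_congr rfl fun k _ => ?_
    rw [spend, Finset.mul_sum]
    exact Finset.sum_congr rfl fun e he => by rw [← (Finset.mem_filter.mp he).2]; ring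
  have hshift : ∀ e : I × K, fwin μ e.1 ((1 - lam e.2) * r e) (b e) =
      fwin μ e.1 (r e) (b e) - lam e.2 * r e * rho μ e.1 (b e) := fun e => by
    rw [← fwin_sub_left μ e.1 (hμ e.1)]
    ring_nf
  simp only [Lag, profit, mul_sub, Finset.sum_sub_distrib, hspend, hshift]
  ring

theorem Lag_eq_sum_dualProfit (E : Finset (I × K)) (μ : I → Measure ℝ)
    [∀ i, IsFiniteMeasure (μ i)] (hμ : ∀ i, Integrable (fun t => t) (μ i)) (s : I → ℝ)
    (r : I × K → ℝ) (m : K → ℝ) (x : (I × K) → ℝ) {b : (I × K) → ℝ} {lam : K → ℝ}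
    (hb : ∀ e ∈ E, b e = (1 - lam e.2) * r e) :
    Lag E μ s r m x b lam = ∑ e ∈ E, dualProfit μ s r lam e * x e + ∑ k : K, lam k * m k := by
  rw [Lag_eq_sum_fwin E μ hμ]
  congr 1
  exact Finset.sum_congr rfl fun e he => by rw [dualProfit, hb e he]; ring

end Lagrangian

section Allocation

variable {I K : Type*} [DecidableEq I]

theorem le_one_of_mem_alloc {E : Finset (I × K)} {x : (I × K) → ℝ} (hx : x ∈ alloc E)
    {e : I × K} (he : e ∈ E) : x e ≤ 1 :=
  calc x e ≤ ∑ f ∈ E.filter (fun f => f.1 = e.1), x f :=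
        Finset.single_le_sum (fun f hf => hx.1 f (Finset.mem_filter.mp hf).1)
          (Finset.mem_filter.mpr ⟨he, rfl⟩)
    _ ≤ 1 := hx.2 e.1

theorem sum_mul_le_sum_abs_of_mem_alloc {E : Finset (I × K)} {x : (I × K) → ℝ}
    (hx : x ∈ alloc E) (c : (I × K) → ℝ) : ∑ e ∈ E, c e * x e ≤ ∑ e ∈ E, |c e| :=
  Finset.sum_le_sum fun e he => by
    have h0 := hx.1 e he
    have h1 := le_one_of_mem_alloc hx he
    calc c e * x e ≤ |c e| * x e := mul_le_mul_of_nonneg_right (le_abs_self _) h0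
      _ ≤ |c e| := mul_le_of_le_one_right (abs_nonneg _) h1

end Allocation

section Dual

variable {I K : Type*} [Fintype K] [DecidableEq I] [DecidableEq K]
  (E : Finset (I × K)) (μ : I → Measure ℝ) (s : I → ℝ) (r : I × K → ℝ) (m : K → ℝ)

theorem Lstar_le {lam : K → ℝ} {v : ℝ}
    (h : ∀ x b, x ∈ alloc E → (∀ e ∈ E, 0 ≤ b e) → Lag E μ s r m x b lam ≤ v) :
    Lstar E μ s r m lam ≤ v := by
  have h0 : (0 : (I × K) → ℝ) ∈ alloc E := ⟨fun _ _ => le_rfl, fun _ => by simp⟩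
  refine csSup_le ⟨_, 0, 0, h0, fun _ _ => le_rfl, rfl⟩ ?_
  rintro v ⟨x, b, hx, hb, rfl⟩
  exact h x b hx hb

variable [∀ i, IsFiniteMeasure (μ i)]

theorem Lag_le_sum_dualProfit (hμ : ∀ i, Integrable (fun t => t) (μ i)) (hs : ∀ i, 0 ≤ s i)
    {x : (I × K) → ℝ} (hx : x ∈ alloc E) (b : (I × K) → ℝ) (lam : K → ℝ) :
    Lag E μ s r m x b lam ≤ ∑ e ∈ E, dualProfit μ s r lam e * x e + ∑ k : K, lam k * m k := by
  rw [Lag_eq_sum_fwin E μ hμ]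
  gcongr ?_ + _
  refine Finset.sum_le_sum fun e he => ?_
  rw [dualProfit]
  exact (mul_le_mul_of_nonneg_left (fwin_le_fwin_self μ e.1 (hμ e.1) _ _)
    (mul_nonneg (hs e.1) (hx.1 e he))).trans_eq (mul_right_comm _ _ _)

theorem bddAbove_Lag (hμ : ∀ i, Integrable (fun t => t) (μ i)) (hs : ∀ i, 0 ≤ s i)
    (lam : K → ℝ) :
    BddAbove {v : ℝ | ∃ x b : (I × K) → ℝ,
      x ∈ alloc E ∧ (∀ e ∈ E, 0 ≤ b e) ∧ v = Lag E μ s r m x b lam} := by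
  refine ⟨∑ e ∈ E, |dualProfit μ s r lam e| + ∑ k : K, lam k * m k, ?_⟩
  rintro v ⟨x, b, hx, -, rfl⟩
  calc Lag E μ s r m x b lam
      ≤ ∑ e ∈ E, dualProfit μ s r lam e * x e + ∑ k : K, lam k * m k :=
        Lag_le_sum_dualProfit E μ s r m hμ hs hx b lam
    _ ≤ _ := by grw [sum_mul_le_sum_abs_of_mem_alloc hx]

theorem Lag_le_Lstar (hμ : ∀ i, Integrable (fun t => t) (μ i)) (hs : ∀ i, 0 ≤ s i)
    {x b : (I × K) → ℝ} (hx : x ∈ alloc E) (hb : ∀ e ∈ E, 0 ≤ b e) (lam : K → ℝ) :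
    Lag E μ s r m x b lam ≤ Lstar E μ s r m lam :=
  le_csSup (bddAbove_Lag E μ s r m hμ hs lam) ⟨x, b, hx, hb, rfl⟩

theorem Lstar_eq_Lag_of_forall_le (hμ : ∀ i, Integrable (fun t => t) (μ i)) (hs : ∀ i, 0 ≤ s i)
    {lam : K → ℝ} {xstar bstar : (I × K) → ℝ} (hx : xstar ∈ alloc E)
    (hmax : ∀ x ∈ alloc E,
      ∑ e ∈ E, dualProfit μ s r lam e * x e ≤ ∑ e ∈ E, dualProfit μ s r lam e * xstar e)
    (hb : ∀ e ∈ E, bstar e = (1 - lam e.2) * r e) (hb0 : ∀ e ∈ E, 0 ≤ bstar e) :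
    Lstar E μ s r m lam = Lag E μ s r m xstar bstar lam := by
  refine le_antisymm (Lstar_le E μ s r m fun x b hx' _ => ?_)
    (Lag_le_Lstar E μ s r m hμ hs hx hb0 lam)
  calc Lag E μ s r m x b lam
      ≤ ∑ e ∈ E, dualProfit μ s r lam e * x e + ∑ k : K, lam k * m k :=
        Lag_le_sum_dualProfit E μ s r m hμ hs hx' b lam
    _ ≤ ∑ e ∈ E, dualProfit μ s r lam e * xstar e + ∑ k : K, lam k * m k := by
        grw [hmax x hx']
    _ = Lag E μ s r m xstar bstar lam := (Lag_eq_sum_dualProfit E μ hμ s r m xstar hb).symm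

end Dual

theorem stmt_9_general (E : Finset (I × K)) (μ : I → Measure ℝ)
    [∀ i, IsProbabilityMeasure (μ i)]
    (hμ : ∀ i, Integrable (fun t => t) (μ i))
    (s : I → ℝ) (hs : ∀ i, 0 ≤ s i)
    (r : I × K → ℝ) (hr : ∀ e ∈ E, 0 ≤ r e)
    (m : K → ℝ)
    (lam : K → ℝ) (hlam : ∀ k, 0 ≤ lam k ∧ lam k ≤ 1)
    (bstar : (I × K) → ℝ) (hbstar : ∀ e : I × K, bstar e = (1 - lam e.2) * r e)
    (xstar : (I × K) → ℝ) (hx1 : xstar ∈ alloc E)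
    (hx2 : ∀ x ∈ alloc E,
      ∑ e ∈ E, (s e.1 * fwin μ e.1 ((1 - lam e.2) * r e) ((1 - lam e.2) * r e)) * x e ≤
      ∑ e ∈ E, (s e.1 * fwin μ e.1 ((1 - lam e.2) * r e) ((1 - lam e.2) * r e)) * xstar e)
    (g : K → ℝ) (hg : ∀ k : K, g k = m k - spend E μ s r xstar bstar k) :
    ∀ lam' : K → ℝ,
      Lstar E μ s r m lam + ∑ k : K, g k * (lam' k - lam k) ≤ Lstar E μ s r m lam' := by
  intro lam'
  have hb0 : ∀ e ∈ E, 0 ≤ bstar e := fun e he => by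
    rw [hbstar e]
    exact mul_nonneg (sub_nonneg.mpr (hlam e.2).2) (hr e he)
  have hslope : ∑ k : K, g k * (lam' k - lam k) =
      Lag E μ s r m xstar bstar lam' - Lag E μ s r m xstar bstar lam := by
    simp only [hg, Lag_sub_Lag]
  rw [Lstar_eq_Lag_of_forall_le E μ s r m hμ hs hx1 hx2 (fun e _ => hbstar e) hb0, hslope,
    add_sub_cancel]
  exact Lag_le_Lstar E μ s r m hμ hs hx1 hb0 lam'

/-- Theorem 1(ii): Procedure 1 computes a valid subgradient of the dual function. With
`b*(λ)_ik := (1 − λ_k) r_ik`, `x*(λ)` any maximizer over `S` of the linear function with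
coefficients `π(λ)_ik := s_i f_i((1−λ_k)r_ik, (1−λ_k)r_ik)`, and
`g(λ)_k := m_k − Σ_{i ∈ I_k} r_ik s_i x*(λ)_ik ρ_i(b*(λ)_ik)`, we have
`L*(λ') ≥ L*(λ) + ⟨g(λ), λ' − λ⟩` for all `λ' ∈ ℝ^K`. -/
theorem stmt_9 (E : Finset (I × K)) (μ : I → Measure ℝ)
    [∀ i, IsProbabilityMeasure (μ i)]
    (hμ : ∀ i, Integrable (fun t => t) (μ i))
    (hμ0 : ∀ i, μ i (Set.Iic 0) = 0)
    (s : I → ℝ) (hs : ∀ i, 0 ≤ s i)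
    (r : I × K → ℝ) (hr : ∀ e ∈ E, 0 ≤ r e)
    (m : K → ℝ)
    (lam : K → ℝ) (hlam : ∀ k, 0 ≤ lam k ∧ lam k ≤ 1)
    (bstar : (I × K) → ℝ) (hbstar : ∀ e : I × K, bstar e = (1 - lam e.2) * r e)
    (xstar : (I × K) → ℝ) (hx1 : xstar ∈ alloc E)
    (hx2 : ∀ x ∈ alloc E,
      ∑ e ∈ E, (s e.1 * fwin μ e.1 ((1 - lam e.2) * r e) ((1 - lam e.2) * r e)) * x e ≤
      ∑ e ∈ E, (s e.1 * fwin μ e.1 ((1 - lam e.2) * r e) ((1 - lam e.2) * r e)) * xstar e)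
    (g : K → ℝ) (hg : ∀ k : K, g k = m k - spend E μ s r xstar bstar k) :
    ∀ lam' : K → ℝ,
      Lstar E μ s r m lam + ∑ k : K, g k * (lam' k - lam k) ≤ Lstar E μ s r m lam' :=
  stmt_9_general E μ hμ s hs r hr m lam hlam bstar hbstar xstar hx1 hx2 g hg
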